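/- (Pre-image of a small ball under scattering.) Fix v̄_i, v_j ∈ ℝ² with all velocities bounded by R > 1 and δ ∈ (0,1). For (v*, ν*) ∈ B_R × 𝕊¹ let v_i := v* - ((v* - v̄_i)·ν*) ν* (post-collisional velocity). Then ∫_{𝕊¹}∫_{B_R} 1_{|v_i - v_j| ≤ δ} |(v* - v̄_i)·ν*| dv* dν* ≤ C R² δ min(δ/|v_j - v̄_i|, 1) for a universal constant C. -/

import Mathlib

open MeasureTheory Metric
open scoped RealInnerProductSpace

noncomputable section

/-- The plane `ℝ²`. -/
abbrev E2 : Type := EuclideanSpace ℝ (Fin 2)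

/-- The surface measure on the unit circle `𝕊¹ ⊂ ℝ²`. -/
def sphμ : Measure (sphere (0 : E2) 1) := (volume : Measure E2).toSphere

/-- The post-collisional velocity `v_i = v* - ((v* - v̄_i)·ν*) ν*`. -/
def scat (vbar v : E2) (ν : E2) : E2 := v - ⟪v - vbar, ν⟫ • ν

/-! Since `⟪v_i, ν⟫ = ⟪v̄_i, ν⟫` for a unit vector `ν`, the constraint `|v_i - v_j| ≤ δ` forces
`|⟪v_j - v̄_i, ν⟫| ≤ δ`, which confines `ν` to a band of the circle of length
`O(min(1, δ / |v_j - v̄_i|))`. For fixed `ν`, the component of `v_i` orthogonal to `ν` is that of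
`v*`, so the admissible `v* ∈ B_R` lie in a `2R × 2δ` rectangle, where the weight is at most `2R`.
Both areas are computed in an orthonormal frame adapted to the relevant direction; on the circle,
`Measure.toSphere` measures a set by twice the area of the cone it spans in the unit disc. -/

open Set
open scoped Pointwise

section OrthonormalCoordinates

variable {ι F : Type*} [Fintype ι] [NormedAddCommGroup F] [InnerProductSpace ℝ F]

theorem OrthonormalBasis.volume_setOf_forall_abs_inner_sub_le [FiniteDimensional ℝ F]
    [MeasurableSpace F] [BorelSpace F] (b : OrthonormalBasis ι ℝ F) (c r : ι → ℝ) :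
    volume {x : F | ∀ i, |⟪b i, x⟫ - c i| ≤ r i} = ∏ i, ENNReal.ofReal (2 * r i) := by
  have hmp := (PiLp.volume_preserving_ofLp ι).comp b.measurePreserving_measurableEquiv
  have hset : {x : F | ∀ i, |⟪b i, x⟫ - c i| ≤ r i}
      = (MeasurableEquiv.trans b.measurableEquiv (MeasurableEquiv.toLp 2 (ι → ℝ)).symm) ⁻¹'
          univ.pi fun i => closedBall (c i) (r i) := by
    ext x
    simp [OrthonormalBasis.measurableEquiv, b.repr_apply_apply, Real.dist_eq]
  rw [hset, MeasurePreserving.measure_preimage_equiv hmp, volume_pi_pi]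
  simp [Real.volume_closedBall]

theorem exists_orthonormalBasis_apply_eq [FiniteDimensional ℝ F]
    (hι : Module.finrank ℝ F = Fintype.card ι) (i : ι) {u : F} (hu : ‖u‖ = 1) :
    ∃ b : OrthonormalBasis ι ℝ F, b i = u := by
  have hv : Orthonormal ℝ (({i} : Set ι).domRestrict fun _ => u) := by
    rw [orthonormal_iff_ite]
    rintro ⟨j, rfl⟩ ⟨k, rfl⟩
    simp [Set.domRestrict, hu]
  obtain ⟨b, hb⟩ := Orthonormal.exists_orthonormalBasis_extension_of_card_eq hι hv
  exact ⟨b, hb i rfl⟩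

theorem exists_norm_eq_one_and_eq_norm_smul [Nontrivial F] (w : F) :
    ∃ u : F, ‖u‖ = 1 ∧ w = ‖w‖ • u := by
  rcases eq_or_ne w 0 with rfl | hw
  · obtain ⟨u, hu⟩ := exists_norm_eq F zero_le_one
    exact ⟨u, hu, by simp⟩
  · refine ⟨‖w‖⁻¹ • w, norm_smul_inv_norm hw, ?_⟩
    rw [smul_smul, mul_inv_cancel₀ (norm_ne_zero_iff.mpr hw), one_smul]

theorem abs_inner_le_div_max {w u ν : F} {δ : ℝ} (hu : ‖u‖ = 1) (hw : w = ‖w‖ • u)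
    (hν : ‖ν‖ = 1) (hδ : 0 < δ) (h : |⟪w, ν⟫| ≤ δ) : |⟪u, ν⟫| ≤ δ / max ‖w‖ δ := by
  rcases le_total ‖w‖ δ with hle | hle
  · rw [max_eq_right hle, div_self hδ.ne']
    simpa [hu, hν] using abs_real_inner_le_norm u ν
  · rw [max_eq_left hle, le_div_iff₀ (hδ.trans_le hle)]
    calc |⟪u, ν⟫| * ‖w‖ = |⟪w, ν⟫| := by
          conv_rhs => rw [hw]
          rw [real_inner_smul_left, abs_mul, abs_norm, mul_comm]
      _ ≤ δ := h

end OrthonormalCoordinates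

section Scattering

theorem inner_scat_self {vbar v ν : E2} (hν : ‖ν‖ = 1) : ⟪scat vbar v ν, ν⟫ = ⟪vbar, ν⟫ := by
  simp only [scat, inner_sub_left, real_inner_smul_left, real_inner_self_eq_norm_sq, hν]
  ring

theorem inner_scat_of_inner_eq_zero {vbar v ν e : E2} (he : ⟪ν, e⟫ = 0) :
    ⟪scat vbar v ν, e⟫ = ⟪v, e⟫ := by
  simp [scat, inner_sub_left, real_inner_smul_left, he]

theorem continuous_scat (vbar ν : E2) : Continuous fun v => scat vbar v ν := by
  unfold scat
  fun_prop

theorem abs_inner_sub_le_of_norm_scat_sub_le {vbar v ν vj : E2} {δ : ℝ} (hν : ‖ν‖ = 1)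
    (h : ‖scat vbar v ν - vj‖ ≤ δ) : |⟪vj - vbar, ν⟫| ≤ δ := by
  have hneg : ⟪vj - vbar, ν⟫ = -⟪scat vbar v ν - vj, ν⟫ := by
    rw [inner_sub_left, inner_sub_left, inner_scat_self hν]
    ring
  calc |⟪vj - vbar, ν⟫| = |⟪scat vbar v ν - vj, ν⟫| := by rw [hneg, abs_neg]
    _ ≤ ‖scat vbar v ν - vj‖ * ‖ν‖ := abs_real_inner_le_norm _ _
    _ ≤ δ := by rwa [hν, mul_one]

theorem volume_ball_inter_setOf_norm_scat_sub_le {vbar vj ν : E2} {R δ : ℝ} (hν : ‖ν‖ = 1) :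
    volume (ball (0 : E2) R ∩ {v | ‖scat vbar v ν - vj‖ ≤ δ})
      ≤ ENNReal.ofReal (2 * R) * ENNReal.ofReal (2 * δ) := by
  obtain ⟨b, rfl⟩ := exists_orthonormalBasis_apply_eq (by simp) (0 : Fin 2) hν
  calc _ ≤ volume {x : E2 | ∀ i, |⟪b i, x⟫ - ![0, ⟪b 1, vj⟫] i| ≤ ![R, δ] i} := by
        refine measure_mono fun v ⟨hv, hvS⟩ => Fin.forall_fin_two.mpr ⟨?_, ?_⟩
        · have h := abs_real_inner_le_norm (b 0) v
          rw [b.norm_eq_one, one_mul] at h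
          simpa using h.trans (mem_ball_zero_iff.mp hv).le
        · have h := abs_real_inner_le_norm (scat vbar v (b 0) - vj) (b 1)
          rw [inner_sub_left, inner_scat_of_inner_eq_zero (b.inner_eq_zero (by decide)),
            real_inner_comm (b 1) v, real_inner_comm (b 1) vj, b.norm_eq_one, mul_one] at h
          simpa using h.trans hvS
    _ = _ := by
        rw [b.volume_setOf_forall_abs_inner_sub_le, Fin.prod_univ_two]
        rfl

theorem setIntegral_ball_indicator_scat_eq_zero {vbar vj ν : E2} {R δ : ℝ} (hν : ‖ν‖ = 1)
    (h : δ < |⟪vj - vbar, ν⟫|) :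
    ∫ v in ball (0 : E2) R,
      {v : E2 | ‖scat vbar v ν - vj‖ ≤ δ}.indicator (fun v => |⟪v - vbar, ν⟫|) v = 0 := by
  have hS : {v : E2 | ‖scat vbar v ν - vj‖ ≤ δ} = ∅ :=
    eq_empty_of_forall_notMem fun v hv =>
      h.not_ge (abs_inner_sub_le_of_norm_scat_sub_le hν hv)
  simp [hS]

theorem norm_setIntegral_ball_indicator_scat_le {vbar vj ν : E2} {R δ : ℝ} (hν : ‖ν‖ = 1)
    (hvbar : ‖vbar‖ ≤ R) (hδ : 0 ≤ δ) :
    ‖∫ v in ball (0 : E2) R,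
      {v : E2 | ‖scat vbar v ν - vj‖ ≤ δ}.indicator (fun v => |⟪v - vbar, ν⟫|) v‖
        ≤ 8 * R ^ 2 * δ := by
  have hR : 0 ≤ R := (norm_nonneg _).trans hvbar
  have hS : MeasurableSet {v : E2 | ‖scat vbar v ν - vj‖ ≤ δ} :=
    (isClosed_le ((continuous_scat vbar ν).sub continuous_const).norm
      continuous_const).measurableSet
  have hint : ∀ v ∈ ball (0 : E2) R ∩ {v | ‖scat vbar v ν - vj‖ ≤ δ},
      ‖|⟪v - vbar, ν⟫|‖ ≤ 2 * R := fun v hv => by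
    rw [norm_abs_eq_norm, Real.norm_eq_abs]
    refine (abs_real_inner_le_norm _ _).trans ?_
    rw [hν, mul_one]
    linarith [norm_sub_le v vbar, mem_ball_zero_iff.mp hv.1]
  have hvol : volume.real (ball (0 : E2) R ∩ {v | ‖scat vbar v ν - vj‖ ≤ δ}) ≤ 4 * R * δ := by
    refine ENNReal.toReal_le_of_le_ofReal (by positivity) ?_
    refine (volume_ball_inter_setOf_norm_scat_sub_le hν).trans_eq ?_
    rw [← ENNReal.ofReal_mul (by positivity)]
    ring_nf
  rw [setIntegral_indicator hS]
  calc _ ≤ 2 * R * volume.real (ball (0 : E2) R ∩ {v | ‖scat vbar v ν - vj‖ ≤ δ}) :=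
        norm_setIntegral_le_of_norm_le_const
          (measure_inter_lt_top_of_left_ne_top measure_ball_lt_top.ne) hint
    _ ≤ 2 * R * (4 * R * δ) := by gcongr
    _ = 8 * R ^ 2 * δ := by ring

end Scattering

section CircleBands

instance : IsFiniteMeasure sphμ := by
  unfold sphμ
  infer_instance

theorem sphμ_real_setOf_abs_inner_le {u : E2} (hu : ‖u‖ = 1) {t : ℝ} (ht : 0 ≤ t) :
    sphμ.real {ν | |⟪u, (ν : E2)⟫| ≤ t} ≤ 8 * t := by
  obtain ⟨b, rfl⟩ := exists_orthonormalBasis_apply_eq (by simp) (0 : Fin 2) hu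
  set B := {ν : sphere (0 : E2) 1 | |⟪b 0, (ν : E2)⟫| ≤ t}
  have hB : MeasurableSet B :=
    (isClosed_le (continuous_const.inner continuous_subtype_val).abs
      continuous_const).measurableSet
  have hcone : Ioo (0 : ℝ) 1 • ((↑) '' B : Set E2)
      ⊆ {x : E2 | ∀ i, |⟪b i, x⟫ - ![0, 0] i| ≤ ![t, 1] i} := by
    rintro _ ⟨r, ⟨hr0, hr1⟩, _, ⟨ν, hν, rfl⟩, rfl⟩
    refine Fin.forall_fin_two.mpr ⟨?_, ?_⟩
    · have h : r * |⟪b 0, (ν : E2)⟫| ≤ 1 * t :=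
        mul_le_mul hr1.le hν (abs_nonneg _) zero_le_one
      simpa [real_inner_smul_right, abs_mul, abs_of_pos hr0] using h
    · have h := abs_real_inner_le_norm (b 1) (r • (ν : E2))
      rw [b.norm_eq_one, one_mul, norm_smul, norm_eq_of_mem_sphere, mul_one,
        Real.norm_of_nonneg hr0.le] at h
      simpa using h.trans hr1.le
  have hle : sphμ B ≤ ENNReal.ofReal (8 * t) :=
    calc sphμ B = 2 * volume (Ioo (0 : ℝ) 1 • ((↑) '' B : Set E2)) := by
          rw [sphμ, Measure.toSphere_apply' _ hB]
          simp
      _ ≤ 2 * volume {x : E2 | ∀ i, |⟪b i, x⟫ - ![0, 0] i| ≤ ![t, 1] i} := by gcongr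
      _ = ENNReal.ofReal (8 * t) := by
          rw [b.volume_setOf_forall_abs_inner_sub_le, Fin.prod_univ_two]
          simp only [Matrix.cons_val_zero, Matrix.cons_val_one]
          rw [← ENNReal.ofReal_mul (by positivity), ← ENNReal.ofReal_ofNat 2,
            ← ENNReal.ofReal_mul zero_le_two]
          ring_nf
  exact ENNReal.toReal_le_of_le_ofReal (by positivity) hle

theorem sphμ_real_setOf_abs_inner_le_div_max (w : E2) {δ : ℝ} (hδ : 0 < δ) :
    sphμ.real {ν | |⟪w, (ν : E2)⟫| ≤ δ} ≤ 8 * (δ / max ‖w‖ δ) := by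
  obtain ⟨u, hu, hw⟩ := exists_norm_eq_one_and_eq_norm_smul w
  calc _ ≤ sphμ.real {ν | |⟪u, (ν : E2)⟫| ≤ δ / max ‖w‖ δ} :=
        measureReal_mono fun ν hν => abs_inner_le_div_max hu hw (norm_eq_of_mem_sphere ν) hδ hν
    _ ≤ _ := sphμ_real_setOf_abs_inner_le hu (by positivity)

end CircleBands

/-- The factor `min(δ / |v_j - v̄_i|, 1)` is written as `δ / max(|v_j - v̄_i|, δ)`. -/
theorem statement9 :
    ∃ C : ℝ, 0 < C ∧
      ∀ (R δ : ℝ) (vbar vj : E2), 1 < R → 0 < δ → δ < 1 → ‖vbar‖ ≤ R → ‖vj‖ ≤ R →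
        (∫ ν : sphere (0 : E2) 1, ∫ v in Metric.ball (0 : E2) R,
            Set.indicator {v : E2 | ‖scat vbar v (ν : E2) - vj‖ ≤ δ}
              (fun v => |⟪v - vbar, (ν : E2)⟫|) v ∂volume ∂sphμ)
          ≤ C * R ^ 2 * δ * (δ / max ‖vj - vbar‖ δ) := by
  refine ⟨64, by norm_num, fun R δ vbar vj _ hδ _ hvbar _ => ?_⟩
  set A := {ν : sphere (0 : E2) 1 | |⟪vj - vbar, (ν : E2)⟫| ≤ δ}
  calc _ = ∫ ν in A, ∫ v in ball (0 : E2) R,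
          {v : E2 | ‖scat vbar v (ν : E2) - vj‖ ≤ δ}.indicator
            (fun v => |⟪v - vbar, (ν : E2)⟫|) v ∂volume ∂sphμ :=
        (setIntegral_eq_integral_of_forall_compl_eq_zero fun ν hν =>
          setIntegral_ball_indicator_scat_eq_zero (norm_eq_of_mem_sphere ν) (not_le.mp hν)).symm
    _ ≤ 8 * R ^ 2 * δ * sphμ.real A :=
        (Real.le_norm_self _).trans <| norm_setIntegral_le_of_norm_le_const (measure_lt_top _ _)
          fun ν _ => norm_setIntegral_ball_indicator_scat_le (norm_eq_of_mem_sphere ν) hvbar hδ.le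
    _ ≤ 8 * R ^ 2 * δ * (8 * (δ / max ‖vj - vbar‖ δ)) := by
        gcongr
        exact sphμ_real_setOf_abs_inner_le_div_max _ hδ
    _ = 64 * R ^ 2 * δ * (δ / max ‖vj - vbar‖ δ) := by ring
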